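/- Let E be a locally compact separable metric space and let 𝒫(E) denote the Borel probability measures on E with the topology of weak convergence. Let z_n, z : [0,∞) → 𝒫(E) be continuous maps such that z_n → z uniformly on compact subsets of [0,∞). Suppose that for each T = 1, 2, … there exists a continuous φ_T : E → ℝ with φ_T > 0 everywhere and sup_n sup_{0 ≤ t ≤ T} ∫_E φ_T(u) z_n(t)(du) < ∞. Let f : E → ℝ be continuous such that f/φ_T vanishes at infinity for every T. Then for every n the map y_n(t) = ∫_E f(u) z_n(t)(du) is a well-defined real-valued function of t, the map y(t) = ∫_E f(u) z(t)(du) is well defined, and y_n → y uniformly on compact subsets of [0,∞). -/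

import Mathlib

/-!
Fix `T` and `δ > 0`. Outside a compact set `|f| < δ φ_T`, so clamping `f` at a bound for `|f|` on
that set gives a bounded continuous `g` with `|f - g| ≤ δ φ_T`. The moment bound
`∫ φ_T dz_n(t) ≤ C` passes to the weak limits `z(t)` by the portmanteau theorem, so `∫ f` and `∫ g`
differ by at most `δ C` against every `z_n(t)` and `z(t)`, `t ≤ T` (this also makes `f` integrable).
For bounded continuous `g`, `ν ↦ ∫ g dν` is continuous for the Lévy–Prokhorov metric, hence
uniformly continuous near the compact set `{z(t) : t ≤ T}`, so `∫ g dz_n(t) → ∫ g dz(t)` uniformly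
in `t ≤ T`.
-/

open MeasureTheory Filter Topology
open Set
open scoped ENNReal NNReal BoundedContinuousFunction

section Uniform

variable {ι α β γ : Type*} {p : Filter ι} {F : ι → α → β} {f : α → β} {s : Set α}

theorem Continuous.comp_tendstoUniformlyOn_of_mapsTo_isCompact [UniformSpace β] [UniformSpace γ]
    {g : β → γ} (hg : Continuous g) {K : Set β} (hK : IsCompact K) (hfK : MapsTo f s K)
    (h : TendstoUniformlyOn F f p s) :
    TendstoUniformlyOn (fun i x => g (F i x)) (fun x => g (f x)) p s := fun r hr => by
  filter_upwards [h _ (hK.uniformContinuousAt_of_continuousAt g (fun b _ => hg.continuousAt) hr)]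
    with i hi x hx using hi x hx (hfK hx)

theorem tendstoUniformlyOn_of_forall_dist_le [PseudoMetricSpace β]
    (h : ∀ ε > 0, ∃ (G : ι → α → β) (g : α → β), TendstoUniformlyOn G g p s ∧
      (∀ i, ∀ x ∈ s, dist (F i x) (G i x) ≤ ε) ∧ ∀ x ∈ s, dist (f x) (g x) ≤ ε) :
    TendstoUniformlyOn F f p s := by
  refine Metric.tendstoUniformlyOn_iff.2 fun ε hε => ?_
  obtain ⟨G, g, hGg, hFG, hfg⟩ := h (ε / 3) (by positivity)
  filter_upwards [Metric.tendstoUniformlyOn_iff.1 hGg (ε / 3) (by positivity)] with i hi x hx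
  calc dist (f x) (F i x) ≤ dist (f x) (g x) + dist (g x) (G i x) + dist (G i x) (F i x) :=
        dist_triangle4 _ _ _ _
    _ < ε / 3 + ε / 3 + ε / 3 := by
        linarith [hfg x hx, hi x hx, hFG i x hx, dist_comm (F i x) (G i x)]
    _ = ε := by ring

end Uniform

theorem exists_boundedContinuous_abs_sub_le_mul {E : Type*} [TopologicalSpace E] {f φ : E → ℝ}
    (hf : Continuous f) (hφ : ∀ x, 0 < φ x)
    (hvan : Tendsto (fun x => f x / φ x) (cocompact E) (𝓝 0)) {δ : ℝ} (hδ : 0 < δ) :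
    ∃ g : E →ᵇ ℝ, ∀ x, |f x - g x| ≤ δ * φ x := by
  obtain ⟨K, hK, hKc⟩ := mem_cocompact.1 (Metric.tendsto_nhds.1 hvan δ hδ)
  obtain ⟨B, hB⟩ := hK.exists_bound_of_continuousOn hf.continuousOn
  set B' := max B 0
  refine ⟨.ofNormedAddCommGroup (fun x => max (-B') (min (f x) B')) (by fun_prop) B'
    fun x => by grind [abs_le, Real.norm_eq_abs], fun x => ?_⟩
  simp only [BoundedContinuousFunction.coe_ofNormedAddCommGroup]
  by_cases hx : x ∈ K
  · have : |f x| ≤ B' := (hB x hx).trans (le_max_left _ _)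
    rw [abs_le] at this
    rw [min_eq_left this.2, max_eq_right this.1, sub_self, abs_zero]
    exact (mul_pos hδ (hφ x)).le
  · have : |f x| < δ * φ x := by
      simpa [abs_div, abs_of_pos (hφ x), div_lt_iff₀ (hφ x)] using hKc hx
    refine le_trans ?_ this.le
    -- clamping to `[-B', B']` moves `f x` towards `0`
    grind [abs_le, le_abs_self, neg_abs_le]

section Integral

variable {E : Type*} [MeasurableSpace E] {μ : Measure E} {f φ : E → ℝ}

theorem dist_integral_le_of_abs_sub_le_mul {g : E → ℝ} (hf : Integrable f μ) (hg : Integrable g μ)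
    (hφ : Integrable φ μ) {δ : ℝ} (hfg : ∀ x, |f x - g x| ≤ δ * φ x) :
    dist (∫ x, f x ∂μ) (∫ x, g x ∂μ) ≤ δ * ∫ x, φ x ∂μ := by
  rw [Real.dist_eq, ← integral_sub hf hg, ← integral_const_mul]
  exact norm_integral_le_of_norm_le (hφ.const_mul δ)
    (ae_of_all _ fun x => (Real.norm_eq_abs _).trans_le (hfg x))

theorem integrable_and_integral_le_of_lintegral_ofReal_le (hφ : AEStronglyMeasurable φ μ)
    (hφ0 : 0 ≤ᵐ[μ] φ) {C : ℝ} (hC : 0 ≤ C)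
    (h : ∫⁻ x, ENNReal.ofReal (φ x) ∂μ ≤ ENNReal.ofReal C) :
    Integrable φ μ ∧ ∫ x, φ x ∂μ ≤ C := by
  refine ⟨⟨hφ, (hasFiniteIntegral_iff_ofReal hφ0).2 (h.trans_lt ENNReal.ofReal_lt_top)⟩, ?_⟩
  rw [integral_eq_lintegral_of_nonneg_ae hφ0 hφ]
  exact ENNReal.toReal_le_of_le_ofReal hC h

variable [TopologicalSpace E] [OpensMeasurableSpace E]

theorem integrable_of_abs_sub_le_mul [IsFiniteMeasure μ] (g : E →ᵇ ℝ)
    (hf : AEStronglyMeasurable f μ)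
    (hφ : Integrable φ μ) {δ : ℝ} (hfg : ∀ x, |f x - g x| ≤ δ * φ x) : Integrable f μ := by
  have : Integrable (fun x => f x - g x) μ :=
    (hφ.const_mul δ).mono' (hf.sub g.continuous.aestronglyMeasurable)
      (ae_of_all _ fun x => (Real.norm_eq_abs _).trans_le (hfg x))
  refine (this.add (g.integrable μ)).congr (ae_of_all _ fun x => ?_)
  simp

theorem integrable_and_dist_integral_le_of_tendsto_div_cocompact [IsFiniteMeasure μ]
    (hf : Continuous f) (hφ : Continuous φ) (hφpos : ∀ x, 0 < φ x)
    (hvan : Tendsto (fun x => f x / φ x) (cocompact E) (𝓝 0)) {C : ℝ} (hC : 0 ≤ C)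
    (hμ : ∫⁻ x, ENNReal.ofReal (φ x) ∂μ ≤ ENNReal.ofReal C) :
    Integrable f μ ∧ ∀ (g : E →ᵇ ℝ) {δ : ℝ}, 0 ≤ δ → (∀ x, |f x - g x| ≤ δ * φ x) →
      dist (∫ x, f x ∂μ) (∫ x, g x ∂μ) ≤ δ * C := by
  obtain ⟨hφi, hφC⟩ := integrable_and_integral_le_of_lintegral_ofReal_le
    hφ.aestronglyMeasurable (ae_of_all _ fun x => (hφpos x).le) hC hμ
  obtain ⟨g₁, hg₁⟩ := exists_boundedContinuous_abs_sub_le_mul hf hφpos hvan one_pos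
  have hfi : Integrable f μ := integrable_of_abs_sub_le_mul g₁ hf.aestronglyMeasurable hφi hg₁
  refine ⟨hfi, fun g δ hδ hfg => ?_⟩
  exact (dist_integral_le_of_abs_sub_le_mul hfi (g.integrable μ) hφi hfg).trans
    (mul_le_mul_of_nonneg_left hφC hδ)

end Integral

namespace MeasureTheory.ProbabilityMeasure

variable {E : Type*} [TopologicalSpace E] [MeasurableSpace E] [OpensMeasurableSpace E]

theorem lintegral_le_of_tendsto [HasOuterApproxClosed E] {μs : ℕ → ProbabilityMeasure E}
    {μ : ProbabilityMeasure E} (h : Tendsto μs atTop (𝓝 μ)) {φ : E → ℝ} (hφ : Continuous φ)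
    (hφ0 : 0 ≤ φ) {c : ℝ≥0∞} (hc : ∀ n, ∫⁻ x, ENNReal.ofReal (φ x) ∂(μs n : Measure E) ≤ c) :
    ∫⁻ x, ENNReal.ofReal (φ x) ∂(μ : Measure E) ≤ c :=
  (lintegral_le_liminf_lintegral_of_forall_isOpen_measure_le_liminf_measure hφ hφ0
    fun _ hG => le_liminf_measure_open_of_tendsto h hG).trans
    (liminf_le_of_frequently_le' (Frequently.of_forall hc))

end MeasureTheory.ProbabilityMeasure

section LevyProkhorov

variable {E : Type*} [PseudoMetricSpace E] [MeasurableSpace E] [OpensMeasurableSpace E]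
  [TopologicalSpace.SeparableSpace E] {ι α : Type*} [TopologicalSpace α] {p : Filter ι}

theorem tendstoUniformlyOn_integral_of_tendstoUniformlyOn_levyProkhorov
    {μs : ι → α → ProbabilityMeasure E} {μ : α → ProbabilityMeasure E} {s : Set α}
    (hs : IsCompact s) (hμ : ContinuousOn μ s)
    (h : TendstoUniformlyOn (fun i a => LevyProkhorov.ofMeasure (μs i a))
      (fun a => LevyProkhorov.ofMeasure (μ a)) p s) (g : E →ᵇ ℝ) :
    TendstoUniformlyOn (fun i a => ∫ x, g x ∂(μs i a : Measure E))
      (fun a => ∫ x, g x ∂(μ a : Measure E)) p s :=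
  have hg : Continuous fun ν : LevyProkhorov (ProbabilityMeasure E) => ∫ x, g x ∂ν.toMeasure :=
    (ProbabilityMeasure.continuous_integral_boundedContinuousFunction g).comp
      LevyProkhorov.continuous_toMeasure_probabilityMeasure
  hg.comp_tendstoUniformlyOn_of_mapsTo_isCompact (hs.image_of_continuousOn
    (LevyProkhorov.continuous_ofMeasure_probabilityMeasure.comp_continuousOn hμ))
    (mapsTo_image _ s) h

theorem tendstoUniformlyOn_integral_of_tendsto_div_cocompact
    {μs : ι → α → ProbabilityMeasure E} {μ : α → ProbabilityMeasure E} {s : Set α}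
    (hs : IsCompact s) (hμ : ContinuousOn μ s)
    (h : TendstoUniformlyOn (fun i a => LevyProkhorov.ofMeasure (μs i a))
      (fun a => LevyProkhorov.ofMeasure (μ a)) p s)
    {f φ : E → ℝ} (hf : Continuous f) (hφ : Continuous φ) (hφpos : ∀ x, 0 < φ x)
    (hvan : Tendsto (fun x => f x / φ x) (cocompact E) (𝓝 0)) {C : ℝ} (hC : 0 ≤ C)
    (hμsC : ∀ i, ∀ a ∈ s, ∫⁻ x, ENNReal.ofReal (φ x) ∂(μs i a : Measure E) ≤ ENNReal.ofReal C)
    (hμC : ∀ a ∈ s, ∫⁻ x, ENNReal.ofReal (φ x) ∂(μ a : Measure E) ≤ ENNReal.ofReal C) :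
    TendstoUniformlyOn (fun i a => ∫ x, f x ∂(μs i a : Measure E))
      (fun a => ∫ x, f x ∂(μ a : Measure E)) p s := by
  refine tendstoUniformlyOn_of_forall_dist_le fun ε hε => ?_
  obtain ⟨δ, hδ, hδC⟩ := exists_pos_mul_lt hε C
  obtain ⟨g, hg⟩ := exists_boundedContinuous_abs_sub_le_mul hf hφpos hvan hδ
  have hfg (ν : ProbabilityMeasure E)
      (hν : ∫⁻ x, ENNReal.ofReal (φ x) ∂(ν : Measure E) ≤ ENNReal.ofReal C) :
      dist (∫ x, f x ∂(ν : Measure E)) (∫ x, g x ∂(ν : Measure E)) ≤ ε :=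
    ((integrable_and_dist_integral_le_of_tendsto_div_cocompact hf hφ hφpos hvan hC hν).2
      g hδ.le hg).trans (by linarith)
  exact ⟨_, _, tendstoUniformlyOn_integral_of_tendstoUniformlyOn_levyProkhorov hs hμ h g,
    fun i a ha => hfg _ (hμsC i a ha), fun a ha => hfg _ (hμC a ha)⟩

end LevyProkhorov

theorem conv_integral_measure_paths_general
    {E : Type*} [MetricSpace E]
    [TopologicalSpace.SeparableSpace E] [MeasurableSpace E] [BorelSpace E]
    (zn : ℕ → NNReal → ProbabilityMeasure E) (z : NNReal → ProbabilityMeasure E)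
    (hz_cont : Continuous z)
    (hunif : ∀ T : NNReal, ∀ ε > (0 : ℝ), ∃ N : ℕ, ∀ n ≥ N, ∀ t ≤ T,
      levyProkhorovDist (zn n t : Measure E) (z t : Measure E) < ε)
    (φ : ℕ → E → ℝ) (hφ_cont : ∀ T, Continuous (φ T)) (hφ_pos : ∀ T x, 0 < φ T x)
    (hφ_bdd : ∀ T : ℕ, ∃ C : ℝ, ∀ n : ℕ, ∀ t : NNReal, t ≤ (T : NNReal) →
      ∫⁻ x, ENNReal.ofReal (φ T x) ∂(zn n t : Measure E) ≤ ENNReal.ofReal C)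
    (f : E → ℝ) (hf_cont : Continuous f)
    (hf_van : ∀ T : ℕ, Tendsto (fun x => f x / φ T x) (cocompact E) (𝓝 0)) :
    (∀ n t, Integrable f (zn n t : Measure E)) ∧
      (∀ t, Integrable f (z t : Measure E)) ∧
      TendstoLocallyUniformly (fun n t => ∫ x, f x ∂(zn n t : Measure E))
        (fun t => ∫ x, f x ∂(z t : Measure E)) atTop := by
  have hLP : ∀ T : ℝ≥0, TendstoUniformlyOn (fun n t => LevyProkhorov.ofMeasure (zn n t))
      (fun t => LevyProkhorov.ofMeasure (z t)) atTop (Iic T) := fun T =>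
    Metric.tendstoUniformlyOn_iff.2 fun ε hε => by
      obtain ⟨N, hN⟩ := hunif T ε hε
      exact eventually_atTop.2 ⟨N, fun n hn t ht => by rw [dist_comm]; exact hN n hn t ht⟩
  have hweak (t : ℝ≥0) : Tendsto (fun n => zn n t) atTop (𝓝 (z t)) :=
    (LevyProkhorov.continuous_toMeasure_probabilityMeasure.tendsto _).comp
      ((hLP t).tendsto_at self_mem_Iic)
  have hbdd (T : ℕ) : ∃ C, 0 ≤ C ∧ ∀ t ≤ (T : ℝ≥0),
      (∀ n, ∫⁻ x, ENNReal.ofReal (φ T x) ∂(zn n t : Measure E) ≤ ENNReal.ofReal C) ∧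
      ∫⁻ x, ENNReal.ofReal (φ T x) ∂(z t : Measure E) ≤ ENNReal.ofReal C := by
    obtain ⟨C, hC⟩ := hφ_bdd T
    refine ⟨max C 0, le_max_right _ _, fun t ht => ?_⟩
    have hn (n : ℕ) : ∫⁻ x, ENNReal.ofReal (φ T x) ∂(zn n t : Measure E) ≤
        ENNReal.ofReal (max C 0) :=
      (hC n t ht).trans (ENNReal.ofReal_le_ofReal (le_max_left C 0))
    exact ⟨hn, ProbabilityMeasure.lintegral_le_of_tendsto (hweak t) (hφ_cont T)
      (fun x => (hφ_pos T x).le) hn⟩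
  choose C hC0 hC using hbdd
  have hint (T : ℕ) (μ : ProbabilityMeasure E)
      (hμ : ∫⁻ x, ENNReal.ofReal (φ T x) ∂(μ : Measure E) ≤ ENNReal.ofReal (C T)) :
      Integrable f μ :=
    (integrable_and_dist_integral_le_of_tendsto_div_cocompact hf_cont (hφ_cont _) (hφ_pos _)
      (hf_van _) (hC0 _) hμ).1
  refine ⟨fun n t => hint _ _ ((hC _ t (Nat.le_ceil t)).1 n),
    fun t => hint _ _ (hC _ t (Nat.le_ceil t)).2,
    tendstoLocallyUniformly_iff_forall_isCompact.2 fun K hK => ?_⟩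
  obtain ⟨b, hb⟩ := hK.bddAbove
  have hKT : K ⊆ Iic (⌈b⌉₊ : ℝ≥0) := fun t ht => (hb ht).trans (Nat.le_ceil b)
  exact tendstoUniformlyOn_integral_of_tendsto_div_cocompact hK hz_cont.continuousOn
    ((hLP _).mono hKT) hf_cont (hφ_cont _) (hφ_pos _) (hf_van _) (hC0 _)
    (fun n t ht => (hC _ t (hKT ht)).1 n) fun t ht => (hC _ t (hKT ht)).2

/-- If measure-valued paths `z_n` converge to `z` uniformly on compact time sets
(in the Lévy–Prokhorov metric metrizing weak convergence), with a uniform-in-`n`,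
locally-uniform-in-`t` bound on the integrals of positive continuous functions
`φ_T`, then for any continuous `f` with `f/φ_T` vanishing at infinity for every
`T`, the integrals `y_n(t) = ∫ f dz_n(t)` are well defined and converge to
`y(t) = ∫ f dz(t)` uniformly on compact time sets (Lemma `imgcnv`). -/
theorem conv_integral_measure_paths
    {E : Type*} [MetricSpace E] [LocallyCompactSpace E]
    [TopologicalSpace.SeparableSpace E] [MeasurableSpace E] [BorelSpace E]
    (zn : ℕ → NNReal → ProbabilityMeasure E) (z : NNReal → ProbabilityMeasure E)
    (hzn_cont : ∀ n, Continuous (zn n)) (hz_cont : Continuous z)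
    (hunif : ∀ T : NNReal, ∀ ε > (0 : ℝ), ∃ N : ℕ, ∀ n ≥ N, ∀ t ≤ T,
      levyProkhorovDist (zn n t : Measure E) (z t : Measure E) < ε)
    (φ : ℕ → E → ℝ) (hφ_cont : ∀ T, Continuous (φ T)) (hφ_pos : ∀ T x, 0 < φ T x)
    (hφ_bdd : ∀ T : ℕ, ∃ C : ℝ, ∀ n : ℕ, ∀ t : NNReal, t ≤ (T : NNReal) →
      ∫⁻ x, ENNReal.ofReal (φ T x) ∂(zn n t : Measure E) ≤ ENNReal.ofReal C)
    (f : E → ℝ) (hf_cont : Continuous f)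
    (hf_van : ∀ T : ℕ, Tendsto (fun x => f x / φ T x) (cocompact E) (𝓝 0)) :
    (∀ n t, Integrable f (zn n t : Measure E)) ∧
      (∀ t, Integrable f (z t : Measure E)) ∧
      TendstoLocallyUniformly (fun n t => ∫ x, f x ∂(zn n t : Measure E))
        (fun t => ∫ x, f x ∂(z t : Measure E)) atTop :=
  conv_integral_measure_paths_general zn z hz_cont hunif φ hφ_cont hφ_pos hφ_bdd f hf_cont hf_van
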